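/- arXiv:2401.16525 — 2 statements merged into one kernel-verified Lean document; each statement's English description precedes it below -/
import Mathlib

section
/- Let K_1, K_2 be unitary operators with spectra closed under conjugation and θ_p = max{φ ∈ [0,π] : e^{iφ} ∈ spec(K_p)}. If θ_1 < π/2, θ_2 < π/2, and θ_1 + θ_2 ≥ π/2, then K_1 ⊗ K_2 has an eigenvalue e^{iφ} with φ ∈ [π/2, π), and hence ‖K_1 ⊗ K_2 − I‖ ≥ √2. -/
open scoped Matrix.Norms.L2Operator Kronecker

/-!
The eigenvalues `e^{iθ₁}` of `K₁` and `e^{iθ₂}` of `K₂` multiply to the eigenvalue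
`e^{i(θ₁+θ₂)}` of `K₁ ⊗ K₂`, and `θ₁ + θ₂ ∈ [π/2, π)`. Shifting, `e^{i(θ₁+θ₂)} - 1` lies in the
spectrum of `K₁ ⊗ K₂ - 1`, so it is bounded by the C*-norm; and `|e^{iφ} - 1| = 2|sin(φ/2)| ≥ √2`
as soon as `cos φ ≤ 0`.
-/

namespace Matrix

variable {R ι κ : Type*} [Fintype ι] [Fintype κ]

theorem kronecker_mulVec_prod_mul [CommSemiring R] (A : Matrix ι ι R) (B : Matrix κ κ R)
    (v : ι → R) (w : κ → R) :
    (A ⊗ₖ B) *ᵥ (fun p => v p.1 * w p.2) = fun p => (A *ᵥ v) p.1 * (B *ᵥ w) p.2 := by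
  ext p
  simp only [mulVec, dotProduct, Fintype.sum_prod_type, kroneckerMap_apply, Finset.sum_mul_sum]
  exact Finset.sum_congr rfl fun _ _ => Finset.sum_congr rfl fun _ _ => by ring

theorem mul_mem_spectrum_kronecker [Field R] [DecidableEq ι] [DecidableEq κ]
    {A : Matrix ι ι R} {B : Matrix κ κ R} {a b : R}
    (ha : a ∈ spectrum R A) (hb : b ∈ spectrum R B) : a * b ∈ spectrum R (A ⊗ₖ B) := by
  rw [← spectrum_toLin', ← Module.End.hasEigenvalue_iff_mem_spectrum] at ha hb ⊢
  obtain ⟨v, hv⟩ := ha.exists_hasEigenvector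
  obtain ⟨w, hw⟩ := hb.exists_hasEigenvector
  have hAv : A *ᵥ v = a • v := by simpa using hv.apply_eq_smul
  have hBw : B *ᵥ w = b • w := by simpa using hw.apply_eq_smul
  obtain ⟨i, hi⟩ := Function.ne_iff.mp hv.2
  obtain ⟨j, hj⟩ := Function.ne_iff.mp hw.2
  refine Module.End.hasEigenvalue_of_hasEigenvector
    (x := fun p => v p.1 * w p.2) ⟨Module.End.mem_eigenspace_iff.mpr ?_, ?_⟩
  · rw [toLin'_apply, kronecker_mulVec_prod_mul, hAv, hBw]
    ext p
    simp only [Pi.smul_apply, smul_eq_mul]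
    ring
  · exact Function.ne_iff.mpr ⟨(i, j), mul_ne_zero hi hj⟩

end Matrix

theorem CStarAlgebra.norm_le_norm_of_mem_spectrum {A : Type*} [CStarAlgebra A] {a : A} {z : ℂ}
    (hz : z ∈ spectrum ℂ a) : ‖z‖ ≤ ‖a‖ := by
  have : Nontrivial A := by
    by_contra h
    rw [not_nontrivial_iff_subsingleton] at h
    simp [spectrum.of_subsingleton] at hz
  exact spectrum.norm_le_norm_of_mem hz

theorem Complex.sqrt_two_le_norm_exp_mul_I_sub_one {φ : ℝ} (hφ : Real.cos φ ≤ 0) :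
    √2 ≤ ‖Complex.exp (φ * Complex.I) - 1‖ := by
  have hcos : Real.cos φ = 1 - 2 * Real.sin (φ / 2) ^ 2 := by
    have h := Real.cos_two_mul' (φ / 2)
    rw [mul_div_cancel₀ φ two_ne_zero] at h
    linarith [Real.cos_sq_add_sin_sq (φ / 2)]
  rw [mul_comm, Complex.norm_exp_I_mul_ofReal_sub_one, Real.norm_eq_abs, ← Real.sqrt_sq_eq_abs]
  exact Real.sqrt_le_sqrt (by linarith)

theorem stmt_12_general (n m : ℕ)
    (K₁ : Matrix (Fin n) (Fin n) ℂ) (K₂ : Matrix (Fin m) (Fin m) ℂ)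
    (θ₁ θ₂ : ℝ)
    (hθ₁ : IsGreatest {φ : ℝ | φ ∈ Set.Icc 0 Real.pi ∧
        Complex.exp (φ * Complex.I) ∈ spectrum ℂ K₁} θ₁)
    (hθ₂ : IsGreatest {φ : ℝ | φ ∈ Set.Icc 0 Real.pi ∧
        Complex.exp (φ * Complex.I) ∈ spectrum ℂ K₂} θ₂)
    (h₁ : θ₁ < Real.pi / 2) (h₂ : θ₂ < Real.pi / 2)
    (hsum : Real.pi / 2 ≤ θ₁ + θ₂) :
    (∃ φ ∈ Set.Ico (Real.pi / 2) Real.pi,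
        Complex.exp (φ * Complex.I) ∈ spectrum ℂ (K₁ ⊗ₖ K₂)) ∧
      Real.sqrt 2 ≤ ‖K₁ ⊗ₖ K₂ - 1‖ := by
  obtain ⟨⟨-, hspec₁⟩, -⟩ := hθ₁
  obtain ⟨⟨-, hspec₂⟩, -⟩ := hθ₂
  have hφ : θ₁ + θ₂ ∈ Set.Ico (Real.pi / 2) Real.pi := ⟨hsum, by linarith⟩
  have hspec : Complex.exp (↑(θ₁ + θ₂) * Complex.I) ∈ spectrum ℂ (K₁ ⊗ₖ K₂) := by
    simpa only [Complex.ofReal_add, add_mul, Complex.exp_add] using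
      Matrix.mul_mem_spectrum_kronecker hspec₁ hspec₂
  refine ⟨⟨θ₁ + θ₂, hφ, hspec⟩, ?_⟩
  have hspec_sub : Complex.exp (↑(θ₁ + θ₂) * Complex.I) - 1 ∈ spectrum ℂ (K₁ ⊗ₖ K₂ - 1) := by
    simpa only [spectrum.sub_singleton_eq, map_one] using
      Set.sub_mem_sub hspec (Set.mem_singleton (1 : ℂ))
  calc √2 ≤ ‖Complex.exp (↑(θ₁ + θ₂) * Complex.I) - 1‖ :=
        Complex.sqrt_two_le_norm_exp_mul_I_sub_one
          (Real.cos_nonpos_of_pi_div_two_le_of_le hφ.1 (by linarith [hφ.2]))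
    _ ≤ ‖K₁ ⊗ₖ K₂ - 1‖ := CStarAlgebra.norm_le_norm_of_mem_spectrum hspec_sub

/-- Additivity lemma, case (b): if `K₁, K₂` are unitaries with conjugation-closed spectra,
maximal angles `θ₁, θ₂ < π/2` and `θ₁ + θ₂ ≥ π/2`, then `K₁ ⊗ K₂` has an eigenvalue
`e^{iφ}` with `φ ∈ [π/2, π)`, and hence `‖K₁ ⊗ K₂ − I‖ ≥ √2`. -/
theorem stmt_12 (n m : ℕ) (hn : 0 < n) (hm : 0 < m)
    (K₁ : Matrix (Fin n) (Fin n) ℂ) (K₂ : Matrix (Fin m) (Fin m) ℂ)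
    (hK₁ : K₁ ∈ Matrix.unitaryGroup (Fin n) ℂ)
    (hK₂ : K₂ ∈ Matrix.unitaryGroup (Fin m) ℂ)
    (hconj₁ : ∀ z ∈ spectrum ℂ K₁, (starRingEnd ℂ) z ∈ spectrum ℂ K₁)
    (hconj₂ : ∀ z ∈ spectrum ℂ K₂, (starRingEnd ℂ) z ∈ spectrum ℂ K₂)
    (θ₁ θ₂ : ℝ)
    (hθ₁ : IsGreatest {φ : ℝ | φ ∈ Set.Icc 0 Real.pi ∧
        Complex.exp (φ * Complex.I) ∈ spectrum ℂ K₁} θ₁)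
    (hθ₂ : IsGreatest {φ : ℝ | φ ∈ Set.Icc 0 Real.pi ∧
        Complex.exp (φ * Complex.I) ∈ spectrum ℂ K₂} θ₂)
    (h₁ : θ₁ < Real.pi / 2) (h₂ : θ₂ < Real.pi / 2)
    (hsum : Real.pi / 2 ≤ θ₁ + θ₂) :
    (∃ φ ∈ Set.Ico (Real.pi / 2) Real.pi,
        Complex.exp (φ * Complex.I) ∈ spectrum ℂ (K₁ ⊗ₖ K₂)) ∧
      Real.sqrt 2 ≤ ‖K₁ ⊗ₖ K₂ - 1‖ :=
  stmt_12_general n m K₁ K₂ θ₁ θ₂ hθ₁ hθ₂ h₁ h₂ hsum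
end

section
/- Let K_1,...,K_ℓ be unitary operators on pairwise distinct tensor factors, each with spectrum closed under complex conjugation, and θ_p = max{φ ∈ [0,π] : e^{iφ} ∈ spec(K_p)} with each θ_p < π/2. If φ := Σ_p θ_p < π/2, then ‖K_1 ⊗ ⋯ ⊗ K_ℓ − I‖ = |e^{iφ} − 1|. -/
/-!
The tensor product `U = K₁ ⊗ ⋯ ⊗ K_ℓ` is unitary, and for a unitary `‖U - 1‖² = 2 (1 - x)`
where `x` is the least real part of a point of `σ(U)`; so it suffices to show `x = cos φ`.
The factors `1 ⊗ ⋯ ⊗ K_p ⊗ ⋯ ⊗ 1` are commuting normal elements, hence lie in a commutative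
C⋆-algebra; evaluating its characters shows that every point of `σ(U)` is a product `∏ c_p` with
`c_p ∈ σ(K_p)`. Since `σ(K_p)` lies on the unit circle and is closed under conjugation,
`c_p = e^{iψ_p}` with `|ψ_p| ≤ θ_p`, so `Re ∏ c_p = cos (∑ ψ_p) ≥ cos φ` because `φ ≤ π`.
Conversely the tensor product of eigenvectors for the `e^{iθ_p}` is an eigenvector of `U`
for `e^{iφ}`.
-/

open scoped Matrix.Norms.L2Operator

open scoped IsMulCommutative in
theorem spectrum_noncommProd_subset {A ι : Type*} [CStarAlgebra A] [Fintype ι] (g : ι → A)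
    (hcomm : ∀ i j, Commute (g i) (g j)) (hstar : ∀ i j, Commute (g i) (star (g j))) :
    spectrum ℂ (Finset.univ.noncommProd g fun i _ j _ _ => hcomm i j) ⊆
      {z | ∃ c : ι → ℂ, (∀ i, c i ∈ spectrum ℂ (g i)) ∧ ∏ i, c i = z} := by
  intro z hz
  let S₀ := StarAlgebra.adjoin ℂ (Set.range g)
  have : IsMulCommutative S₀ := StarAlgebra.isMulCommutative_adjoin ℂ
    (by rintro _ ⟨i, rfl⟩ _ ⟨j, rfl⟩; exact hcomm i j)
    (by rintro _ ⟨i, rfl⟩ _ ⟨j, rfl⟩; exact hstar i j)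
  let S := S₀.topologicalClosure
  have hS : IsClosed (S : Set A) := S₀.isClosed_topologicalClosure
  let _ : CommRing S := S₀.commRingTopologicalClosure mul_comm
  let _ : CommCStarAlgebra S := { }
  let u : ι → S := fun i =>
    ⟨g i, S₀.le_topologicalClosure (StarAlgebra.subset_adjoin ℂ _ ⟨i, rfl⟩)⟩
  have hu : ((∏ i, u i : S) : A) = Finset.univ.noncommProd g fun i _ j _ _ => hcomm i j := by
    have := Finset.univ.map_noncommProd u (fun i _ j _ _ => Commute.all (u i) (u j)) S.subtype
    rwa [Finset.noncommProd_eq_prod] at this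
  rw [← hu, ← StarSubalgebra.spectrum_eq S, WeakDual.CharacterSpace.mem_spectrum_iff_exists] at hz
  obtain ⟨f, rfl⟩ := hz
  refine ⟨fun i => f (u i), fun i => ?_, (map_prod f u Finset.univ).symm⟩
  rw [show g i = u i from rfl, ← StarSubalgebra.spectrum_eq S]
  exact AlgHom.apply_mem_spectrum f (u i)

namespace Complex

lemma exp_arg_mul_I_of_norm_eq_one {z : ℂ} (hz : ‖z‖ = 1) : exp (z.arg * I) = z := by
  simpa [hz] using norm_mul_exp_arg_mul_I z

open ComplexConjugate in
lemma abs_arg_le_of_isGreatest {s : Set ℂ} (hs : ∀ z ∈ s, conj z ∈ s) {θ : ℝ}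
    (hθ : IsGreatest {φ : ℝ | φ ∈ Set.Icc 0 Real.pi ∧ exp (φ * I) ∈ s} θ)
    {z : ℂ} (hz : z ∈ s) (hz1 : ‖z‖ = 1) : |z.arg| ≤ θ := by
  refine hθ.2 ⟨⟨abs_nonneg _, abs_arg_le_pi z⟩, ?_⟩
  rcases abs_choice z.arg with h | h <;> rw [h]
  · rwa [exp_arg_mul_I_of_norm_eq_one hz1]
  · have : exp (↑(-z.arg) * I) = conj (exp (z.arg * I)) := by
      rw [← exp_conj]
      simp
    rw [this, exp_arg_mul_I_of_norm_eq_one hz1]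
    exact hs z hz

end Complex

namespace Matrix

variable {ι m R : Type*} [Fintype ι]

section CommSemiring

variable [CommSemiring R]

def piKron (M : ι → Matrix m m R) : Matrix (ι → m) (ι → m) R :=
  of fun x y => ∏ p, M p (x p) (y p)

@[simp]
lemma piKron_apply (M : ι → Matrix m m R) (x y : ι → m) :
    piKron M x y = ∏ p, M p (x p) (y p) := rfl

lemma star_piKron [StarRing R] (M : ι → Matrix m m R) :
    star (piKron M) = piKron (star M) := by
  ext x y
  simp [star_apply]

@[simp]
lemma piKron_one [DecidableEq m] : piKron (1 : ι → Matrix m m R) = 1 := by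
  ext x y
  simp [one_apply, Finset.prod_boole, funext_iff]

lemma piKron_mulSingle_apply [DecidableEq ι] [DecidableEq m] (p : ι) (M : Matrix m m R)
    (x y : ι → m) :
    piKron (Pi.mulSingle p M) x y =
      M (x p) (y p) * ∏ q ∈ Finset.univ.erase p, (1 : Matrix m m R) (x q) (y q) := by
  rw [piKron_apply, ← Finset.mul_prod_erase _ _ (Finset.mem_univ p), Pi.mulSingle_eq_same]
  congr 1
  exact Finset.prod_congr rfl fun q hq => by rw [Pi.mulSingle_eq_of_ne (Finset.ne_of_mem_erase hq)]

variable [DecidableEq ι] [Fintype m]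

lemma piKron_mul (M N : ι → Matrix m m R) :
    piKron (M * N) = piKron M * piKron N := by
  ext x y
  simp [mul_apply, Finset.prod_univ_sum, Finset.prod_mul_distrib]

lemma piKron_mulVec (M : ι → Matrix m m R) (v : ι → m → R) :
    piKron M *ᵥ (fun y => ∏ p, v p (y p)) = fun x => ∏ p, (M p *ᵥ v p) (x p) := by
  ext x
  simp [mulVec, dotProduct, Finset.prod_univ_sum, Finset.prod_mul_distrib]

variable [DecidableEq m]

lemma piKron_mem_unitary [StarRing R] {M : ι → Matrix m m R} (hM : ∀ p, M p ∈ unitary _) :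
    piKron M ∈ unitary _ := by
  have h₁ : star M * M = 1 := funext fun p => Unitary.star_mul_self_of_mem (hM p)
  have h₂ : M * star M = 1 := funext fun p => Unitary.mul_star_self_of_mem (hM p)
  rw [Unitary.mem_iff, star_piKron, ← piKron_mul, ← piKron_mul, h₁, h₂, piKron_one]
  exact ⟨rfl, rfl⟩

@[simps]
def piKronHom : (ι → Matrix m m R) →* Matrix (ι → m) (ι → m) R where
  toFun := piKron
  map_one' := piKron_one
  map_mul' := piKron_mul

def piKronAlgHom (p : ι) : Matrix m m R →ₐ[R] Matrix (ι → m) (ι → m) R :=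
  AlgHom.ofLinearMap
    { toFun := fun M => piKron (Pi.mulSingle p M)
      map_add' := fun M N => by ext; simp only [piKron_mulSingle_apply, add_apply, add_mul]
      map_smul' := fun r M => by
        ext
        simp only [piKron_mulSingle_apply, smul_apply, smul_eq_mul, mul_assoc, RingHom.id_apply] }
    (by simp) (fun M N => by simp [← piKron_mul, Pi.mulSingle_mul])

lemma piKronAlgHom_apply (p : ι) (M : Matrix m m R) :
    piKronAlgHom p M = piKronHom (Pi.mulSingle p M) := rfl

lemma star_piKronAlgHom [StarRing R] (p : ι) (M : Matrix m m R) :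
    star (piKronAlgHom p M) = piKronAlgHom p (star M) := by
  simp only [piKronAlgHom_apply, piKronHom_apply, star_piKron, Pi.star_mulSingle]

lemma commute_piKronAlgHom {p q : ι} (hpq : p ≠ q) (M N : Matrix m m R) :
    Commute (piKronAlgHom p M) (piKronAlgHom q N) := by
  rw [piKronAlgHom_apply, piKronAlgHom_apply]
  exact (Pi.mulSingle_commute hpq M N).map piKronHom

lemma piKron_eq_noncommProd (M : ι → Matrix m m R) :
    piKron M = Finset.univ.noncommProd (fun p => piKronAlgHom p (M p))
      fun p _ q _ hpq => commute_piKronAlgHom hpq (M p) (M q) := by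
  conv_lhs => rw [← Finset.noncommProd_mulSingle M]
  exact Finset.map_noncommProd _ _ _ piKronHom

end CommSemiring

lemma mem_spectrum_iff_exists_mulVec_eq_smul {𝕜 : Type*} [Field 𝕜] [Fintype m] [DecidableEq m]
    {A : Matrix m m 𝕜} {z : 𝕜} : z ∈ spectrum 𝕜 A ↔ ∃ v ≠ 0, A *ᵥ v = z • v := by
  rw [← spectrum_toLin', ← Module.End.hasEigenvalue_iff_mem_spectrum,
    Module.End.hasEigenvalue_iff, Submodule.ne_bot_iff]
  simp [and_comm]

lemma prod_mem_spectrum_piKron {𝕜 : Type*} [Field 𝕜] [DecidableEq ι] [Fintype m] [DecidableEq m]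
    {M : ι → Matrix m m 𝕜} {z : ι → 𝕜} (hz : ∀ p, z p ∈ spectrum 𝕜 (M p)) :
    ∏ p, z p ∈ spectrum 𝕜 (piKron M) := by
  simp only [mem_spectrum_iff_exists_mulVec_eq_smul] at hz ⊢
  choose v hv hMv using hz
  refine ⟨fun y => ∏ p, v p (y p), ?_, ?_⟩
  · choose j hj using fun p => Function.ne_iff.mp (hv p)
    exact Function.ne_iff.mpr ⟨j, Finset.prod_ne_zero_iff.mpr fun p _ => hj p⟩
  · ext x
    simp [piKron_mulVec, hMv, Finset.prod_mul_distrib]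

lemma spectrum_piKron_subset [DecidableEq ι] [Fintype m] [DecidableEq m]
    {M : ι → Matrix m m ℂ} (hM : ∀ p, IsStarNormal (M p)) :
    spectrum ℂ (piKron M) ⊆
      {z | ∃ c : ι → ℂ, (∀ p, c p ∈ spectrum ℂ (M p)) ∧ ∏ p, c p = z} := by
  intro z hz
  rw [piKron_eq_noncommProd] at hz
  have hstar : ∀ p q, Commute (piKronAlgHom p (M p)) (star (piKronAlgHom q (M q))) := by
    intro p q
    rw [star_piKronAlgHom]
    rcases eq_or_ne p q with rfl | hpq
    · exact (hM p).star_comm_self.symm.map (piKronAlgHom p)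
    · exact commute_piKronAlgHom hpq _ _
  have hcomm : ∀ p q, Commute (piKronAlgHom p (M p)) (piKronAlgHom q (M q)) := by
    intro p q
    rcases eq_or_ne p q with rfl | hpq
    · exact Commute.refl _
    · exact commute_piKronAlgHom hpq _ _
  obtain ⟨c, hc, rfl⟩ := spectrum_noncommProd_subset _ hcomm hstar hz
  exact ⟨c, fun p => AlgHom.spectrum_apply_subset _ _ (hc p), rfl⟩

open Complex ComplexConjugate in
lemma isLeast_re_spectrum_piKron [DecidableEq ι] [Fintype m] [DecidableEq m]
    {K : ι → Matrix m m ℂ} (hK : ∀ p, K p ∈ unitary _)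
    (hconj : ∀ p, ∀ z ∈ spectrum ℂ (K p), conj z ∈ spectrum ℂ (K p)) {θ : ι → ℝ}
    (hθ : ∀ p, IsGreatest {φ : ℝ | φ ∈ Set.Icc 0 Real.pi ∧ exp (φ * I) ∈ spectrum ℂ (K p)} (θ p))
    (hθπ : ∑ p, θ p ≤ Real.pi) :
    IsLeast (re '' spectrum ℂ (piKron K)) (Real.cos (∑ p, θ p)) := by
  constructor
  · refine ⟨exp ((∑ p, θ p : ℝ) * I), ?_, exp_ofReal_mul_I_re _⟩
    rw [ofReal_sum, Finset.sum_mul, exp_sum]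
    exact prod_mem_spectrum_piKron fun p => (hθ p).1.2
  · rintro _ ⟨w, hw, rfl⟩
    obtain ⟨c, hc, rfl⟩ := spectrum_piKron_subset (fun p => isStarNormal_of_mem_unitary (hK p)) hw
    have hc1 p : ‖c p‖ = 1 := spectrum.norm_eq_one_of_unitary (hK p) (hc p)
    have hprod : ∏ p, c p = exp ((∑ p, (c p).arg : ℝ) * I) := by
      rw [ofReal_sum, Finset.sum_mul, exp_sum]
      exact Finset.prod_congr rfl fun p _ => (exp_arg_mul_I_of_norm_eq_one (hc1 p)).symm
    have harg : |∑ p, (c p).arg| ≤ ∑ p, θ p :=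
      (Finset.abs_sum_le_sum_abs _ _).trans <| Finset.sum_le_sum fun p _ =>
        abs_arg_le_of_isGreatest (hconj p) (hθ p) (hc p) (hc1 p)
    rw [hprod, exp_ofReal_mul_I_re, ← Real.cos_abs (∑ p, (c p).arg)]
    exact Real.cos_le_cos_of_nonneg_of_le_pi (abs_nonneg _) hθπ harg

end Matrix

theorem stmt_13_general (ℓ n : ℕ) (K : Fin ℓ → Matrix (Fin n) (Fin n) ℂ)
    (hK : ∀ p, K p ∈ Matrix.unitaryGroup (Fin n) ℂ)
    (hconj : ∀ p, ∀ z ∈ spectrum ℂ (K p), (starRingEnd ℂ) z ∈ spectrum ℂ (K p))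
    (θ : Fin ℓ → ℝ)
    (hθ : ∀ p, IsGreatest {φ : ℝ | φ ∈ Set.Icc 0 Real.pi ∧
        Complex.exp (φ * Complex.I) ∈ spectrum ℂ (K p)} (θ p))
    (hsum : ∑ p, θ p < Real.pi / 2) :
    ‖(Matrix.of fun x y : Fin ℓ → Fin n => ∏ p, K p (x p) (y p)) - 1‖ =
      ‖Complex.exp ((∑ p, θ p) * Complex.I) - 1‖ := by
  have hleast := Matrix.isLeast_re_spectrum_piKron hK hconj hθ (by linarith [Real.pi_pos])
  rw [← sq_eq_sq₀ (norm_nonneg _) (norm_nonneg _)]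
  calc ‖Matrix.piKron K - 1‖ ^ 2 = 2 * (1 - Real.cos (∑ p, θ p)) :=
        Unitary.norm_sub_one_sq_eq (Matrix.piKron_mem_unitary hK) hleast
    _ = ‖Complex.exp ((∑ p, θ p : ℝ) * Complex.I) - 1‖ ^ 2 := by
        rw [Complex.norm_sub_one_sq_eq_of_norm_eq_one (Complex.norm_exp_ofReal_mul_I _),
          Complex.exp_ofReal_mul_I_re]

/-- If `K 1, ..., K ℓ` are unitaries on distinct tensor factors, each with
conjugation-closed spectrum and maximal angle `θ p < π/2`, and `φ = Σ_p θ p < π/2`,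
then `‖K 1 ⊗ ⋯ ⊗ K ℓ − I‖ = |e^{iφ} − 1|`. Here the tensor product is realized as
the matrix with entries `∏ p, K p (x p) (y p)`. -/
theorem stmt_13 (ℓ n : ℕ) (hn : 0 < n) (K : Fin ℓ → Matrix (Fin n) (Fin n) ℂ)
    (hK : ∀ p, K p ∈ Matrix.unitaryGroup (Fin n) ℂ)
    (hconj : ∀ p, ∀ z ∈ spectrum ℂ (K p), (starRingEnd ℂ) z ∈ spectrum ℂ (K p))
    (θ : Fin ℓ → ℝ)
    (hθ : ∀ p, IsGreatest {φ : ℝ | φ ∈ Set.Icc 0 Real.pi ∧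
        Complex.exp (φ * Complex.I) ∈ spectrum ℂ (K p)} (θ p))
    (hθlt : ∀ p, θ p < Real.pi / 2)
    (hsum : ∑ p, θ p < Real.pi / 2) :
    ‖(Matrix.of fun x y : Fin ℓ → Fin n => ∏ p, K p (x p) (y p)) - 1‖ =
      ‖Complex.exp ((∑ p, θ p) * Complex.I) - 1‖ :=
  stmt_13_general ℓ n K hK hconj θ hθ hsum
end
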